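/- If A(z) = H(η)·ℓ(η) with η = z^r and H(η) = η^{(r-1)/(2r)} exp(η^{(r+1)/r}/(r+1)), then the equation S_z^r A = (−z)^r A is equivalent to the Pearcey-type ODE (r ∂_η)^r ℓ(η) = (−1)^r η ℓ(η). -/

import Mathlib

/-- The operator `S_z f = z^{1-r} f' - ((r-1)/(2z^r)) f - z f` on functions. -/
noncomputable def SopFun (r : ℕ) (f : ℝ → ℝ) : ℝ → ℝ :=
  fun z => z ^ (1 - (r : ℤ)) * deriv f z - ((r - 1 : ℝ) / (2 * z ^ r)) * f z - z * f z

/-- The operator `r ∂_η` on functions of `η`. -/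
noncomputable def Rdeta (r : ℕ) (ℓ : ℝ → ℝ) : ℝ → ℝ := fun η => r * deriv ℓ η

open scoped ContDiff

namespace PearceyAux

noncomputable def Hf (r : ℕ) : ℝ → ℝ :=
  fun x => x ^ ((r - 1 : ℝ) / 2) * Real.exp (x ^ (r + 1) / (r + 1))

lemma Hf_pos (r : ℕ) {z : ℝ} (hz : 0 < z) : 0 < Hf r z :=
  mul_pos (Real.rpow_pos_of_pos hz _) (Real.exp_pos _)

lemma hasDerivAt_Hf (r : ℕ) {z : ℝ} (hz : 0 < z) :
    HasDerivAt (Hf r) (Hf r z * ((r - 1 : ℝ) / (2 * z) + z ^ r)) z := by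
  have h1 : HasDerivAt (fun x : ℝ => x ^ ((r - 1 : ℝ) / 2))
      (((r - 1 : ℝ) / 2) * z ^ ((r - 1 : ℝ) / 2 - 1)) z :=
    Real.hasDerivAt_rpow_const (Or.inl hz.ne')
  have h2 : HasDerivAt (fun x : ℝ => x ^ (r + 1) / ((r : ℝ) + 1))
      ((((r : ℕ) + 1 : ℕ) : ℝ) * z ^ r / ((r : ℝ) + 1)) z := by
    simpa using (hasDerivAt_pow (r + 1) z).div_const ((r : ℝ) + 1)
  have h3 := h2.exp
  have h := h1.mul h3
  have hHf : Hf r = fun x : ℝ => x ^ ((r - 1 : ℝ) / 2) * Real.exp (x ^ (r + 1) / ((r : ℝ) + 1)) :=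
    rfl
  rw [hHf]
  refine h.congr_deriv ?_
  have hr1 : ((r : ℝ) + 1) ≠ 0 := by positivity
  have hzr : z ^ ((r - 1 : ℝ) / 2 - 1) = z ^ ((r - 1 : ℝ) / 2) / z := by
    rw [Real.rpow_sub hz, Real.rpow_one]
  rw [hzr]
  push_cast
  field_simp

lemma SopFun_step (r : ℕ) (hr : 2 ≤ r) (L : ℝ → ℝ) (hL : ContDiff ℝ ∞ L)
    {z : ℝ} (hz : 0 < z) :
    SopFun r (fun x => Hf r x * L (x ^ r)) z = Hf r z * Rdeta r L (z ^ r) := by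
  have hLd : HasDerivAt L (deriv L (z ^ r)) (z ^ r) :=
    (hL.differentiable (by simp) (z ^ r)).hasDerivAt
  have hpow : HasDerivAt (fun x : ℝ => x ^ r) ((r : ℝ) * z ^ (r - 1)) z := hasDerivAt_pow r z
  have hcomp : HasDerivAt (fun x : ℝ => L (x ^ r))
      (deriv L (z ^ r) * ((r : ℝ) * z ^ (r - 1))) z := hLd.comp z hpow
  have hB := (hasDerivAt_Hf r hz).mul hcomp
  have hderiv : deriv (fun x => Hf r x * L (x ^ r)) z = _ := hB.deriv
  simp only [SopFun, Rdeta, hderiv]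
  have hz0 : z ≠ 0 := hz.ne'
  have hzp : z ^ (1 - (r : ℤ)) = z / z ^ r := by
    rw [zpow_sub₀ hz0, zpow_one, zpow_natCast]
  have hzr1 : z ^ (r - 1) = z ^ r / z := by
    rw [eq_div_iff hz0, ← pow_succ]
    congr 1
    omega
  rw [hzp, hzr1]
  have hzrne : z ^ r ≠ 0 := pow_ne_zero _ hz0
  field_simp
  ring

lemma Rdeta_contDiff (r : ℕ) {L : ℝ → ℝ} (hL : ContDiff ℝ ∞ L) : ContDiff ℝ ∞ (Rdeta r L) :=
  contDiff_const.mul (contDiff_infty_iff_deriv.mp hL).2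

lemma Rdeta_iterate_contDiff (r : ℕ) {L : ℝ → ℝ} (hL : ContDiff ℝ ∞ L) (k : ℕ) :
    ContDiff ℝ ∞ ((Rdeta r)^[k] L) := by
  induction k with
  | zero => exact hL
  | succ k ih => rw [Function.iterate_succ_apply']; exact Rdeta_contDiff r ih

lemma iterate_eq (r : ℕ) (hr : 2 ≤ r) (ℓ : ℝ → ℝ) (hℓ : ContDiff ℝ ∞ ℓ) (k : ℕ) :
    ∀ z : ℝ, 0 < z →
      (SopFun r)^[k] (fun z => Hf r z * ℓ (z ^ r)) z = Hf r z * ((Rdeta r)^[k] ℓ) (z ^ r) := by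
  induction k with
  | zero => intro z hz; simp
  | succ k ih =>
    intro z hz
    rw [Function.iterate_succ_apply', Function.iterate_succ_apply']
    have hLk : ContDiff ℝ ∞ ((Rdeta r)^[k] ℓ) := Rdeta_iterate_contDiff r hℓ k
    have heq : (SopFun r)^[k] (fun z => Hf r z * ℓ (z ^ r)) =ᶠ[nhds z]
        (fun x => Hf r x * ((Rdeta r)^[k] ℓ) (x ^ r)) := by
      filter_upwards [isOpen_Ioi.mem_nhds hz] with x hx using ih x hx
    have hderiv : deriv ((SopFun r)^[k] fun z => Hf r z * ℓ (z ^ r)) z =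
        deriv (fun x => Hf r x * ((Rdeta r)^[k] ℓ) (x ^ r)) z := heq.deriv_eq
    have hstep := SopFun_step r hr ((Rdeta r)^[k] ℓ) hLk hz
    simp only [SopFun] at hstep ⊢
    rw [hderiv, ih z hz]
    exact hstep

end PearceyAux

open PearceyAux in
/-- If `A(z) = H(η)·ℓ(η)` with `η = z^r` and `H = z^{(r-1)/2} exp(z^{r+1}/(r+1))`,
then `S_z^r A = (-z)^r A` is equivalent to the Pearcey-type ODE
`(r ∂_η)^r ℓ(η) = (-1)^r η ℓ(η)`. -/
theorem Sz_r_eq_iff_pearcey (r : ℕ) (hr : 2 ≤ r) (ℓ : ℝ → ℝ) (hℓ : ContDiff ℝ (⊤ : ℕ∞) ℓ) :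
    let H : ℝ → ℝ := fun x => x ^ ((r - 1 : ℝ) / 2) * Real.exp (x ^ (r + 1) / (r + 1))
    let A : ℝ → ℝ := fun z => H z * ℓ (z ^ r)
    ((∀ z : ℝ, 0 < z → (SopFun r)^[r] A z = (-z) ^ r * A z) ↔
      (∀ η : ℝ, 0 < η → (Rdeta r)^[r] ℓ η = (-1) ^ r * η * ℓ η)) := by
  intro H A
  have hA : A = fun z => Hf r z * ℓ (z ^ r) := rfl
  constructor
  · intro h η hη
    obtain ⟨z, hz, hzr⟩ : ∃ z : ℝ, 0 < z ∧ z ^ r = η := by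
      refine ⟨η ^ ((r : ℝ)⁻¹), Real.rpow_pos_of_pos hη _, ?_⟩
      rw [← Real.rpow_natCast (η ^ ((r : ℝ)⁻¹)) r, ← Real.rpow_mul hη.le]
      rw [inv_mul_cancel₀ (by positivity : ((r : ℝ)) ≠ 0), Real.rpow_one]
    have hh := h z hz
    rw [hA, iterate_eq r hr ℓ (hℓ.of_le (by simp)) r z hz] at hh
    have hexp : (-z) ^ r = (-1 : ℝ) ^ r * z ^ r := by rw [neg_pow]
    simp only [hexp, hzr] at hh
    refine mul_left_cancel₀ (Hf_pos r hz).ne' ?_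
    rw [hh]; ring
  · intro h z hz
    have hη : 0 < z ^ r := pow_pos hz r
    have hh := h (z ^ r) hη
    rw [hA, iterate_eq r hr ℓ (hℓ.of_le (by simp)) r z hz, hh]
    have hexp : (-z) ^ r = (-1 : ℝ) ^ r * z ^ r := by rw [neg_pow]
    rw [hexp]
    ring
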